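/- For real γ with 0 ≤ γ < 1, we have -log((1/2)(1 + sqrt(1 - 4γ²/(2+γ)²))) ≤ 2·log(1 + γ/2) + γ³. -/

import Mathlib

/-! Since `√t ≥ t` for `t ≤ 1`, the argument of the outer logarithm is at least
`1 - 2γ² / (2 + γ)²`, which exceeds `4 / (2 + γ)² = (1 + γ/2)⁻²` by `(4γ - γ²) / (2 + γ)² ≥ 0`.
Taking `-log` gives the bound `2 log (1 + γ/2)`, and `γ³ ≥ 0` is slack. -/

open Real

lemma neg_log_four_div_two_add_sq (γ : ℝ) :
    -log (4 / (2 + γ) ^ 2) = 2 * log (1 + γ / 2) := by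
  have h : 4 / (2 + γ) ^ 2 = ((1 + γ / 2) ^ 2)⁻¹ := by
    rw [← inv_div]; ring
  rw [h, log_inv, log_pow]; push_cast; ring

lemma four_div_two_add_sq_le_half_one_add_sqrt {γ : ℝ} (h0 : 0 ≤ γ) (h4 : γ ≤ 4) :
    4 / (2 + γ) ^ 2 ≤ (1 / 2) * (1 + √(1 - 4 * γ ^ 2 / (2 + γ) ^ 2)) := by
  have hpos : 0 < (2 + γ) ^ 2 := by positivity
  have hsqrt : 1 - 4 * γ ^ 2 / (2 + γ) ^ 2 ≤ √(1 - 4 * γ ^ 2 / (2 + γ) ^ 2) :=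
    le_sqrt_self_iff.mpr (sub_le_self _ (by positivity))
  have hgap : 1 - 2 * γ ^ 2 / (2 + γ) ^ 2 - 4 / (2 + γ) ^ 2 = (4 * γ - γ ^ 2) / (2 + γ) ^ 2 := by
    field_simp; ring
  have hgap_nonneg : 0 ≤ (4 * γ - γ ^ 2) / (2 + γ) ^ 2 :=
    div_nonneg (by nlinarith) hpos.le
  have hhalf : 2 * γ ^ 2 / (2 + γ) ^ 2 = (4 * γ ^ 2 / (2 + γ) ^ 2) / 2 := by ring
  linarith

lemma neg_log_half_one_add_sqrt_le {γ : ℝ} (h0 : 0 ≤ γ) (h4 : γ ≤ 4) :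
    -log ((1 / 2) * (1 + √(1 - 4 * γ ^ 2 / (2 + γ) ^ 2))) ≤ 2 * log (1 + γ / 2) := by
  rw [← neg_log_four_div_two_add_sq, neg_le_neg_iff]
  exact log_le_log (by positivity) (four_div_two_add_sq_le_half_one_add_sqrt h0 h4)

theorem entropy_bound_explicit (γ : ℝ) (h0 : 0 ≤ γ) (h1 : γ < 1) :
    -Real.log ((1 / 2) * (1 + Real.sqrt (1 - 4 * γ ^ 2 / (2 + γ) ^ 2))) ≤
      2 * Real.log (1 + γ / 2) + γ ^ 3 := by
  have hmain := neg_log_half_one_add_sqrt_le h0 (by linarith)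
  have hcube : 0 ≤ γ ^ 3 := by positivity
  linarith
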